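/- arXiv:2111.11782 — 2 statements merged into one kernel-verified Lean document; each statement's English description precedes it below -/
import Mathlib

section
/- Every function $f$ in the cone $Conv$ of continuous, concave, nonnegative functions on $(0, \infty)$ belongs to the sum $L^\infty + L^\infty(1/t) = L^\infty(\min(1, 1/s))$, and its norm in this sum space equals $f(1)$. -/
open ENNReal Set

noncomputable section

def Ninf (f : ℝ → ℝ) : ℝ≥0∞ := ⨆ (t : ℝ) (_ : 0 < t), ENNReal.ofReal |f t|

def Ninf1 (f : ℝ → ℝ) : ℝ≥0∞ :=
  ⨆ (t : ℝ) (_ : 0 < t), ENNReal.ofReal |f t| / ENNReal.ofReal t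

def Kfun (N0 N1 : (ℝ → ℝ) → ℝ≥0∞) (t : ℝ) (x : ℝ → ℝ) : ℝ≥0∞ :=
  ⨅ (y : (ℝ → ℝ) × (ℝ → ℝ)) (_ : x = y.1 + y.2), N0 y.1 + ENNReal.ofReal t * N1 y.2

/-!
Concavity gives a supporting line at `1`: `f s ≤ a + b * s` for `s > 0`, with `a + b = f 1`, and
nonnegativity of `f` forces `a, b ≥ 0`. Splitting `f = min f a + (f - min f a)` then exhibits an
`L^∞` part of norm `≤ a` and an `L^∞(1/t)` part of norm `≤ b`; the same line bounds the weighted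
sup norm. Evaluating any decomposition at `s = 1` gives the reverse inequality `f 1 ≤ K(1, f)`.
-/

theorem ConvexOn.exists_add_mul_sub_le {S : Set ℝ} {f : ℝ → ℝ} (hf : ConvexOn ℝ S f) {x : ℝ}
    (hx : x ∈ interior S) : ∃ c, ∀ y ∈ S, f x + c * (y - x) ≤ f y := by
  refine ⟨derivWithin f (Ioi x) x, fun y hy => ?_⟩
  rcases lt_trichotomy y x with hyx | rfl | hxy
  · have h := (hf.slope_le_leftDeriv_of_mem_interior hy hx hyx).trans
      (hf.leftDeriv_le_rightDeriv_of_mem_interior hx)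
    rw [slope_def_field, div_le_iff₀ (sub_pos.2 hyx)] at h
    linarith
  · simp
  · have h := hf.rightDeriv_le_slope_of_mem_interior hx hy hxy
    rw [slope_def_field, le_div_iff₀ (sub_pos.2 hxy)] at h
    linarith

theorem ConcaveOn.exists_le_add_mul_sub {S : Set ℝ} {f : ℝ → ℝ} (hf : ConcaveOn ℝ S f) {x : ℝ}
    (hx : x ∈ interior S) : ∃ m, ∀ y ∈ S, f y ≤ f x + m * (y - x) := by
  obtain ⟨c, hc⟩ := hf.neg.exists_add_mul_sub_le hx
  refine ⟨-c, fun y hy => ?_⟩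
  have := hc y hy
  simp only [Pi.neg_apply] at this
  linarith

theorem nonneg_and_nonneg_of_forall_pos_nonneg_add_mul {a b : ℝ}
    (h : ∀ s, 0 < s → 0 ≤ a + b * s) : 0 ≤ a ∧ 0 ≤ b := by
  constructor
  · by_contra! ha
    rcases le_or_gt b 0 with hb | hb
    · linarith [h 1 one_pos]
    · have hs : b * (-a / (2 * b)) = -a / 2 := by field_simp
      linarith [h (-a / (2 * b)) (div_pos (by linarith) (by linarith))]
  · by_contra! hb
    have hs : b * ((|a| + 1) / -b) = -(|a| + 1) := by field_simp [hb.ne]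
    linarith [h ((|a| + 1) / -b) (div_pos (by positivity) (by linarith)), le_abs_self a]

theorem ofReal_abs_le_Ninf (f : ℝ → ℝ) {t : ℝ} (ht : 0 < t) :
    ENNReal.ofReal |f t| ≤ Ninf f :=
  le_iSup₂_of_le t ht le_rfl

theorem ofReal_abs_div_le_Ninf1 (f : ℝ → ℝ) {t : ℝ} (ht : 0 < t) :
    ENNReal.ofReal |f t| / ENNReal.ofReal t ≤ Ninf1 f :=
  le_iSup₂_of_le t ht le_rfl

theorem Ninf_le_ofReal {f : ℝ → ℝ} {a : ℝ} (h : ∀ t, 0 < t → |f t| ≤ a) :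
    Ninf f ≤ ENNReal.ofReal a :=
  iSup₂_le fun t ht => ENNReal.ofReal_le_ofReal (h t ht)

theorem Ninf1_le_ofReal {f : ℝ → ℝ} {b : ℝ} (hb : 0 ≤ b) (h : ∀ t, 0 < t → |f t| ≤ b * t) :
    Ninf1 f ≤ ENNReal.ofReal b := by
  refine iSup₂_le fun t ht => ?_
  rw [ENNReal.div_le_iff (by simpa using ht) ENNReal.ofReal_ne_top, ← ENNReal.ofReal_mul hb]
  exact ENNReal.ofReal_le_ofReal (h t ht)

theorem ofReal_abs_le_Kfun (x : ℝ → ℝ) {t : ℝ} (ht : 0 < t) :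
    ENNReal.ofReal |x t| ≤ Kfun Ninf Ninf1 t x := by
  refine le_iInf₂ fun y hy => ?_
  have ht' : ENNReal.ofReal t ≠ 0 := by simpa using ht
  calc ENNReal.ofReal |x t|
      ≤ ENNReal.ofReal |y.1 t| + ENNReal.ofReal |y.2 t| := by
        rw [← ENNReal.ofReal_add (abs_nonneg _) (abs_nonneg _), hy]
        exact ENNReal.ofReal_le_ofReal (abs_add_le _ _)
    _ = ENNReal.ofReal |y.1 t| +
          ENNReal.ofReal t * (ENNReal.ofReal |y.2 t| / ENNReal.ofReal t) := by
        rw [ENNReal.mul_div_cancel ht' ENNReal.ofReal_ne_top]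
    _ ≤ Ninf y.1 + ENNReal.ofReal t * Ninf1 y.2 := by
        gcongr
        · exact ofReal_abs_le_Ninf y.1 ht
        · exact ofReal_abs_div_le_Ninf1 y.2 ht

theorem Kfun_le_ofReal_of_le_add_mul {f : ℝ → ℝ} {a b t : ℝ} (ha : 0 ≤ a) (hb : 0 ≤ b)
    (ht : 0 ≤ t) (hf : ∀ s, 0 < s → 0 ≤ f s ∧ f s ≤ a + b * s) :
    Kfun Ninf Ninf1 t f ≤ ENNReal.ofReal (a + t * b) := by
  set g : ℝ → ℝ := fun s => min (f s) a
  have hg : Ninf g ≤ ENNReal.ofReal a := Ninf_le_ofReal fun s hs => by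
    rw [abs_of_nonneg (le_min (hf s hs).1 ha)]
    exact min_le_right _ _
  have hfg : Ninf1 (f - g) ≤ ENNReal.ofReal b := Ninf1_le_ofReal hb fun s hs => by
    have : 0 ≤ f s - g s := sub_nonneg.2 (min_le_left _ _)
    simp only [Pi.sub_apply, abs_of_nonneg this, g]
    rcases le_total (f s) a with h | h
    · rw [min_eq_left h, sub_self]; exact mul_nonneg hb hs.le
    · rw [min_eq_right h]; linarith [(hf s hs).2]
  calc Kfun Ninf Ninf1 t f ≤ Ninf g + ENNReal.ofReal t * Ninf1 (f - g) :=
        iInf₂_le (g, f - g) (add_sub_cancel g f).symm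
    _ ≤ ENNReal.ofReal a + ENNReal.ofReal t * ENNReal.ofReal b := by gcongr
    _ = ENNReal.ofReal (a + t * b) := by
        rw [← ENNReal.ofReal_mul ht, ← ENNReal.ofReal_add ha (by positivity)]

theorem add_mul_mul_min_one_div_le {a b s : ℝ} (ha : 0 ≤ a) (hb : 0 ≤ b) (hs : 0 < s) :
    (a + b * s) * min 1 (1 / s) ≤ a + b := by
  rcases le_total s 1 with h | h
  · rw [min_eq_left (by rw [le_div_iff₀ hs]; linarith)]
    nlinarith
  · rw [min_eq_right (by rw [div_le_one hs]; exact h), mul_one_div, div_le_iff₀ hs]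
    nlinarith

theorem conv_in_sum_norm_general (f : ℝ → ℝ)
    (hconc : ConcaveOn ℝ (Ioi (0 : ℝ)) f)
    (hnonneg : ∀ t : ℝ, 0 < t → 0 ≤ f t) :
    Kfun Ninf Ninf1 1 f = ENNReal.ofReal (f 1) ∧
    (⨆ (s : ℝ) (_ : 0 < s), ENNReal.ofReal (|f s| * min 1 (1 / s)))
      = ENNReal.ofReal (f 1) := by
  obtain ⟨m, hm⟩ := hconc.exists_le_add_mul_sub (x := 1) (by simp)
  have hline : ∀ s, 0 < s → f s ≤ (f 1 - m) + m * s := fun s hs => by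
    linarith [hm s hs]
  obtain ⟨ha, hb⟩ := nonneg_and_nonneg_of_forall_pos_nonneg_add_mul (a := f 1 - m) (b := m)
    fun s hs => (hnonneg s hs).trans (hline s hs)
  have hf1 : ENNReal.ofReal (f 1) = ENNReal.ofReal |f 1| := by
    rw [abs_of_nonneg (hnonneg 1 one_pos)]
  refine ⟨le_antisymm ?_ (hf1 ▸ ofReal_abs_le_Kfun f one_pos), le_antisymm ?_ ?_⟩
  · simpa using Kfun_le_ofReal_of_le_add_mul ha hb zero_le_one
      fun s hs => ⟨hnonneg s hs, hline s hs⟩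
  · refine iSup₂_le fun s hs => ENNReal.ofReal_le_ofReal ?_
    rw [abs_of_nonneg (hnonneg s hs)]
    calc f s * min 1 (1 / s) ≤ (f 1 - m + m * s) * min 1 (1 / s) :=
          mul_le_mul_of_nonneg_right (hline s hs) (le_min zero_le_one (one_div_pos.2 hs).le)
      _ ≤ f 1 := by simpa using add_mul_mul_min_one_div_le ha hb hs
  · refine le_iSup₂_of_le 1 one_pos (le_of_eq ?_)
    simp [hf1]

/-- Every continuous, concave, nonnegative function `f` on `(0, ∞)` belongs to
the sum `L^∞ + L^∞(1/t) = L^∞(min(1, 1/s))`, and its norm in this sum space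
(the K-functional at `t = 1`, which also equals the weighted sup norm
`sup_{s>0} |f s| · min(1, 1/s)`) equals `f 1`. -/
theorem conv_in_sum_norm (f : ℝ → ℝ)
    (hcont : ContinuousOn f (Ioi (0 : ℝ)))
    (hconc : ConcaveOn ℝ (Ioi (0 : ℝ)) f)
    (hnonneg : ∀ t : ℝ, 0 < t → 0 ≤ f t) :
    Kfun Ninf Ninf1 1 f = ENNReal.ofReal (f 1) ∧
    (⨆ (s : ℝ) (_ : 0 < s), ENNReal.ofReal (|f s| * min 1 (1 / s)))
      = ENNReal.ofReal (f 1) :=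
  conv_in_sum_norm_general f hconc hnonneg

end
end

section
/- Let $E$ and $F$ be quasi-Banach function lattices on $(0,\infty)$ that are interpolation spaces with respect to the couple $(L^\infty, L^\infty(1/t))$. Then the continuous embedding $(L^\infty + F) \cap (E + L^\infty(1/t)) \subseteq E + F$ holds: every $x$ in the left-hand space satisfies $x \chi_{[1,\infty)} \in F$, $x \chi_{(0,1]} \in E$, and $\|x\|_{E+F} \preceq \|x\|_{(L^\infty+F)\cap(E+L^\infty(1/t))}$. -/
open ENNReal Set

noncomputable section

def IsLatticeQN (N : (ℝ → ℝ) → ℝ≥0∞) (C : ℝ≥0∞) : Prop :=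
  1 ≤ C ∧ C < ∞ ∧ N 0 = 0 ∧
    (∀ (c : ℝ) (f : ℝ → ℝ), N (c • f) = ENNReal.ofReal |c| * N f) ∧
    (∀ f g : ℝ → ℝ, N (f + g) ≤ C * (N f + N g)) ∧
    ∀ f g : ℝ → ℝ, (∀ s, |f s| ≤ |g s|) → N f ≤ N g

/-- `E` is an interpolation space with respect to the couple
`(L^∞, L^∞(1/t))`: it is intermediate and every linear operator bounded on
both `L^∞` and `L^∞(1/t)` is bounded on `E`. -/
def IsInterp (NE : (ℝ → ℝ) → ℝ≥0∞) : Prop :=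
  (∃ c : ℝ≥0∞, 0 < c ∧ c < ∞ ∧ ∀ f : ℝ → ℝ,
      NE f ≤ c * max (Ninf f) (Ninf1 f) ∧ Kfun Ninf Ninf1 1 f ≤ c * NE f) ∧
    ∀ (T : (ℝ → ℝ) →ₗ[ℝ] (ℝ → ℝ)) (M : ℝ≥0∞),
      (∀ f, Ninf (T f) ≤ M * Ninf f) → (∀ f, Ninf1 (T f) ≤ M * Ninf1 f) →
        ∃ M' : ℝ≥0∞, M' < ∞ ∧ ∀ f, NE (T f) ≤ M' * NE f

lemma Ninf_le_of_forall {f : ℝ → ℝ} {c : ℝ≥0∞}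
    (h : ∀ t, 0 < t → ENNReal.ofReal |f t| ≤ c) : Ninf f ≤ c := by
  simp only [Ninf]; exact iSup₂_le h

lemma le_Ninf {f : ℝ → ℝ} {t : ℝ} (ht : 0 < t) : ENNReal.ofReal |f t| ≤ Ninf f := by
  simp only [Ninf]
  exact le_iSup_of_le t (le_iSup_of_le ht le_rfl)

lemma Ninf1_le_of_forall {f : ℝ → ℝ} {c : ℝ≥0∞}
    (h : ∀ t, 0 < t → ENNReal.ofReal |f t| / ENNReal.ofReal t ≤ c) : Ninf1 f ≤ c := by
  simp only [Ninf1]; exact iSup₂_le h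

lemma le_Ninf1 {f : ℝ → ℝ} {t : ℝ} (ht : 0 < t) :
    ENNReal.ofReal |f t| / ENNReal.ofReal t ≤ Ninf1 f := by
  simp only [Ninf1]
  exact le_iSup_of_le t (le_iSup_of_le ht le_rfl)

/-- The first embedding of Lemma `add`:
`(L^∞ + F) ∩ (E + L^∞(1/t)) ⊆ E + F` continuously, for interpolation lattices
`E, F` of the couple `(L^∞, L^∞(1/t))`; moreover `x·χ_{[1,∞)} ∈ F` and
`x·χ_{(0,1]} ∈ E` with norm control. -/
theorem intersection_embeds_in_sum (NE NF : (ℝ → ℝ) → ℝ≥0∞) (CE CF : ℝ≥0∞)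
    (hE : IsLatticeQN NE CE) (hF : IsLatticeQN NF CF)
    (hEi : IsInterp NE) (hFi : IsInterp NF) :
    ∃ C : ℝ≥0∞, C < ∞ ∧ ∀ x : ℝ → ℝ,
      (NF (fun t => if 1 ≤ t then x t else 0)
          ≤ C * max (Kfun Ninf NF 1 x) (Kfun NE Ninf1 1 x)) ∧
      (NE (fun t => if 0 < t ∧ t ≤ 1 then x t else 0)
          ≤ C * max (Kfun Ninf NF 1 x) (Kfun NE Ninf1 1 x)) ∧
      Kfun NE NF 1 x ≤ C * max (Kfun Ninf NF 1 x) (Kfun NE Ninf1 1 x) := by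
  obtain ⟨hCE1, hCEfin, -, -, hEadd, hEmono⟩ := hE
  obtain ⟨hCF1, hCFfin, -, -, hFadd, hFmono⟩ := hF
  obtain ⟨⟨cE, hcE0, hcEfin, hcE⟩, -⟩ := hEi
  obtain ⟨⟨cF, hcF0, hcFfin, hcF⟩, -⟩ := hFi
  set C1 : ℝ≥0∞ := CF * (cF + 1) with hC1
  set C2 : ℝ≥0∞ := CE * (cE + 1) with hC2
  have hC1fin : C1 ≠ ∞ := ENNReal.mul_ne_top hCFfin.ne
    (ENNReal.add_ne_top.mpr ⟨hcFfin.ne, one_ne_top⟩)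
  have hC2fin : C2 ≠ ∞ := ENNReal.mul_ne_top hCEfin.ne
    (ENNReal.add_ne_top.mpr ⟨hcEfin.ne, one_ne_top⟩)
  have hC1pos : C1 ≠ 0 := by
    simp only [hC1, mul_ne_zero_iff]
    exact ⟨fun h => by simp [h] at hCF1, fun h => by simp at h⟩
  have hC2pos : C2 ≠ 0 := by
    simp only [hC2, mul_ne_zero_iff]
    exact ⟨fun h => by simp [h] at hCE1, fun h => by simp at h⟩
  -- Claim A : the F-part
  have claimA : ∀ x : ℝ → ℝ,
      NF (fun t => if 1 ≤ t then x t else 0) ≤ C1 * Kfun Ninf NF 1 x := by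
    intro x
    have key : ∀ (y : (ℝ → ℝ) × (ℝ → ℝ)), x = y.1 + y.2 →
        NF (fun t => if 1 ≤ t then x t else 0)
          ≤ C1 * (Ninf y.1 + ENNReal.ofReal 1 * NF y.2) := by
      rintro ⟨a, b⟩ hy
      have hdecomp : (fun t => if 1 ≤ t then x t else 0)
          = (fun t => if 1 ≤ t then a t else 0) + (fun t => if 1 ≤ t then b t else 0) := by
        funext t
        by_cases h : 1 ≤ t <;> simp [h, hy, Pi.add_apply]
      have hNa : NF (fun t => if 1 ≤ t then a t else 0) ≤ cF * Ninf a := by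
        refine le_trans (hcF _).1 (mul_le_mul_right (max_le ?_ ?_) cF)
        · refine Ninf_le_of_forall fun t ht => ?_
          by_cases h : 1 ≤ t
          · simp only [h, if_true]; exact le_Ninf ht
          · simp [h]
        · refine Ninf1_le_of_forall fun t ht => ?_
          by_cases h : 1 ≤ t
          · simp only [h, if_true]
            refine ENNReal.div_le_of_le_mul' ?_
            calc ENNReal.ofReal |a t| ≤ Ninf a := le_Ninf ht
              _ ≤ Ninf a * ENNReal.ofReal t :=
                le_mul_of_one_le_right zero_le (by
                  rw [← ENNReal.ofReal_one]
                  exact ENNReal.ofReal_le_ofReal h)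
              _ = ENNReal.ofReal t * Ninf a := mul_comm _ _
          · simp [h]
      have hNb : NF (fun t => if 1 ≤ t then b t else 0) ≤ NF b := by
        refine hFmono _ _ fun s => ?_
        by_cases h : 1 ≤ s <;> simp [h, abs_nonneg]
      calc NF (fun t => if 1 ≤ t then x t else 0)
          ≤ CF * (NF (fun t => if 1 ≤ t then a t else 0)
              + NF (fun t => if 1 ≤ t then b t else 0)) := by rw [hdecomp]; exact hFadd _ _
        _ ≤ CF * (cF * Ninf a + NF b) := mul_le_mul_right (add_le_add hNa hNb) CF
        _ ≤ CF * ((cF + 1) * (Ninf a + NF b)) := by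
            refine mul_le_mul_right ?_ CF
            rw [mul_add]
            exact add_le_add (mul_le_mul_left le_self_add _)
              (le_mul_of_one_le_left zero_le le_add_self)
        _ = C1 * (Ninf a + ENNReal.ofReal 1 * NF b) := by
            rw [ENNReal.ofReal_one, one_mul, hC1, mul_assoc]
    have h1 : NF (fun t => if 1 ≤ t then x t else 0) / C1 ≤ Kfun Ninf NF 1 x := by
      simp only [Kfun]
      exact le_iInf₂ fun y hy => ENNReal.div_le_of_le_mul' (key y hy)
    have := (ENNReal.div_le_iff_le_mul (Or.inl hC1pos) (Or.inl hC1fin)).mp h1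
    rwa [mul_comm] at this
  -- Claim B : the E-part
  have claimB : ∀ x : ℝ → ℝ,
      NE (fun t => if 0 < t ∧ t ≤ 1 then x t else 0) ≤ C2 * Kfun NE Ninf1 1 x := by
    intro x
    have key : ∀ (y : (ℝ → ℝ) × (ℝ → ℝ)), x = y.1 + y.2 →
        NE (fun t => if 0 < t ∧ t ≤ 1 then x t else 0)
          ≤ C2 * (NE y.1 + ENNReal.ofReal 1 * Ninf1 y.2) := by
      rintro ⟨a, b⟩ hy
      have hdecomp : (fun t => if 0 < t ∧ t ≤ 1 then x t else 0)
          = (fun t => if 0 < t ∧ t ≤ 1 then a t else 0)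
            + (fun t => if 0 < t ∧ t ≤ 1 then b t else 0) := by
        funext t
        by_cases h : 0 < t ∧ t ≤ 1 <;> simp [h, hy, Pi.add_apply]
      have hNa : NE (fun t => if 0 < t ∧ t ≤ 1 then a t else 0) ≤ NE a := by
        refine hEmono _ _ fun s => ?_
        by_cases h : 0 < s ∧ s ≤ 1 <;> simp [h, abs_nonneg]
      have hNb : NE (fun t => if 0 < t ∧ t ≤ 1 then b t else 0) ≤ cE * Ninf1 b := by
        refine le_trans (hcE _).1 (mul_le_mul_right (max_le ?_ ?_) cE)
        · refine Ninf_le_of_forall fun t ht => ?_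
          by_cases h : 0 < t ∧ t ≤ 1
          · simp only [h, if_true]
            have h1 : ENNReal.ofReal |b t| / ENNReal.ofReal t ≤ Ninf1 b := le_Ninf1 ht
            have h2 : ENNReal.ofReal t ≠ 0 := by
              simp [ENNReal.ofReal_eq_zero, not_le, h.1]
            calc ENNReal.ofReal |b t|
                = ENNReal.ofReal |b t| / ENNReal.ofReal t * ENNReal.ofReal t :=
                  (ENNReal.div_mul_cancel h2 ENNReal.ofReal_ne_top).symm
              _ ≤ Ninf1 b * ENNReal.ofReal t := mul_le_mul_left h1 _
              _ ≤ Ninf1 b * 1 := mul_le_mul_right (by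
                  rw [← ENNReal.ofReal_one]
                  exact ENNReal.ofReal_le_ofReal h.2) _
              _ = Ninf1 b := mul_one _
          · simp [h]
        · refine Ninf1_le_of_forall fun t ht => ?_
          by_cases h : 0 < t ∧ t ≤ 1
          · simp only [h, if_true]; exact le_Ninf1 ht
          · simp [h]
      calc NE (fun t => if 0 < t ∧ t ≤ 1 then x t else 0)
          ≤ CE * (NE (fun t => if 0 < t ∧ t ≤ 1 then a t else 0)
              + NE (fun t => if 0 < t ∧ t ≤ 1 then b t else 0)) := by
            rw [hdecomp]; exact hEadd _ _
        _ ≤ CE * (NE a + cE * Ninf1 b) := mul_le_mul_right (add_le_add hNa hNb) CE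
        _ ≤ CE * ((cE + 1) * (NE a + Ninf1 b)) := by
            refine mul_le_mul_right ?_ CE
            rw [mul_add]
            exact add_le_add (le_mul_of_one_le_left zero_le le_add_self)
              (mul_le_mul_left le_self_add _)
        _ = C2 * (NE a + ENNReal.ofReal 1 * Ninf1 b) := by
            rw [ENNReal.ofReal_one, one_mul, hC2, mul_assoc]
    have h1 : NE (fun t => if 0 < t ∧ t ≤ 1 then x t else 0) / C2 ≤ Kfun NE Ninf1 1 x := by
      simp only [Kfun]
      exact le_iInf₂ fun y hy => ENNReal.div_le_of_le_mul' (key y hy)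
    have := (ENNReal.div_le_iff_le_mul (Or.inl hC2pos) (Or.inl hC2fin)).mp h1
    rwa [mul_comm] at this
  -- the global constant
  refine ⟨C1 + C2 + CF * C1, ?_, ?_⟩
  · exact ENNReal.add_lt_top.mpr ⟨ENNReal.add_lt_top.mpr ⟨hC1fin.lt_top, hC2fin.lt_top⟩,
      (ENNReal.mul_ne_top hCFfin.ne hC1fin).lt_top⟩
  intro x
  set K := max (Kfun Ninf NF 1 x) (Kfun NE Ninf1 1 x) with hK
  have h1 : NF (fun t => if 1 ≤ t then x t else 0) ≤ C1 * K :=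
    le_trans (claimA x) (mul_le_mul_right (le_max_left _ _) C1)
  have h2 : NE (fun t => if 0 < t ∧ t ≤ 1 then x t else 0) ≤ C2 * K :=
    le_trans (claimB x) (mul_le_mul_right (le_max_right _ _) C2)
  have hC1le : C1 ≤ C1 + C2 + CF * C1 := le_add_of_le_of_nonneg le_self_add zero_le
  have hC2le : C2 ≤ C1 + C2 + CF * C1 := le_add_of_le_of_nonneg le_add_self zero_le
  refine ⟨le_trans h1 (mul_le_mul_left hC1le K),
    le_trans h2 (mul_le_mul_left hC2le K), ?_⟩
  -- the third estimate
  set u : ℝ → ℝ := fun t => if 0 < t ∧ t ≤ 1 then x t else 0 with hu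
  have hdecomp : x = u + (x - u) := by funext t; simp
  have hKle : Kfun NE NF 1 x ≤ NE u + ENNReal.ofReal 1 * NF (x - u) := by
    simp only [Kfun]
    exact iInf₂_le (⟨u, x - u⟩ : (ℝ → ℝ) × (ℝ → ℝ)) hdecomp
  -- bound NF (x - u)
  set v1 : ℝ → ℝ := fun t => if 1 < t then x t else 0 with hv1
  set v2 : ℝ → ℝ := fun t => if t ≤ 0 then x t else 0 with hv2
  have hvsplit : x - u = v1 + v2 := by
    funext t
    simp only [Pi.sub_apply, Pi.add_apply, hu, hv1, hv2]
    rcases le_or_gt t 0 with h | h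
    · have h2 : ¬(0 < t ∧ t ≤ 1) := fun hc => absurd hc.1 (not_lt.mpr h)
      have h3 : ¬(1 < t) := by linarith
      simp [h, h2, h3]
    · rcases le_or_gt t 1 with h4 | h4
      · simp [h, h4, not_lt.mpr h4, not_le.mpr h]
      · have h2 : ¬(0 < t ∧ t ≤ 1) := fun hc => absurd hc.2 (not_le.mpr h4)
        simp [h2, h4, not_le.mpr h]
  have hv1le : NF v1 ≤ C1 * K := by
    refine le_trans ?_ h1
    refine hFmono _ _ fun s => ?_
    by_cases h : 1 < s
    · simp [hv1, h, h.le]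
    · simp [hv1, h, abs_nonneg]
  have hv2le : NF v2 ≤ 0 := by
    have hz : max (Ninf v2) (Ninf1 v2) = 0 := by
      have ha : Ninf v2 = 0 := by
        refine le_antisymm (Ninf_le_of_forall fun t ht => ?_) zero_le
        simp [hv2, not_le.mpr ht]
      have hb : Ninf1 v2 = 0 := by
        refine le_antisymm (Ninf1_le_of_forall fun t ht => ?_) zero_le
        simp [hv2, not_le.mpr ht, ENNReal.zero_div]
      rw [ha, hb, max_self]
    calc NF v2 ≤ cF * max (Ninf v2) (Ninf1 v2) := (hcF _).1
      _ = 0 := by rw [hz, mul_zero]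
  have hvle : NF (x - u) ≤ CF * C1 * K := by
    calc NF (x - u) = NF (v1 + v2) := by rw [hvsplit]
      _ ≤ CF * (NF v1 + NF v2) := hFadd _ _
      _ ≤ CF * (C1 * K + 0) := mul_le_mul_right (add_le_add hv1le hv2le) CF
      _ = CF * C1 * K := by rw [add_zero, ← mul_assoc]
  calc Kfun NE NF 1 x ≤ NE u + ENNReal.ofReal 1 * NF (x - u) := hKle
    _ = NE u + NF (x - u) := by rw [ENNReal.ofReal_one, one_mul]
    _ ≤ C2 * K + CF * C1 * K := add_le_add h2 hvle
    _ = (C2 + CF * C1) * K := (add_mul _ _ _).symm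
    _ ≤ (C1 + C2 + CF * C1) * K := by
        refine mul_le_mul_left ?_ K
        rw [add_assoc]
        exact le_add_self
  
end
end
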